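/- Let K be an O-category and α : Φ ⇒ A a cocone over an ω-chain Φ of embeddings. If α is a colimiting cocone in K, then every leg α_n is an embedding and ⊔_n α_n ∘ α_n^p = id_A, i.e. α is an O-colimit. -/
import Mathlib

open CategoryTheory OmegaCompletePartialOrder

universe v u

class OHom (K : Type u) [Category.{v} K] where
  homOrder : ∀ X Y : K, OmegaCompletePartialOrder (X ⟶ Y)

attribute [instance] OHom.homOrder

/-- An O-category: a category enriched in dcpos with continuous composition. -/
class OCat (K : Type u) [Category.{v} K] extends OHom K where
  comp_mono : ∀ {X Y Z : K} {f f' : X ⟶ Y} {g g' : Y ⟶ Z},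
    f ≤ f' → g ≤ g' → f ≫ g ≤ f' ≫ g'
  comp_cont_left : ∀ {X Y Z : K} (g : Y ⟶ Z) (c : Chain (X ⟶ Y))
    (hm : Monotone fun n => c n ≫ g),
    ωSup c ≫ g = ωSup ⟨fun n => c n ≫ g, hm⟩
  comp_cont_right : ∀ {X Y Z : K} (f : X ⟶ Y) (c : Chain (Y ⟶ Z))
    (hm : Monotone fun n => f ≫ c n),
    f ≫ ωSup c = ωSup ⟨fun n => f ≫ c n, hm⟩

section Aux
variable {K : Type u} [Category.{v} K]
variable (Φ : ℕ → K) (e : ∀ n, Φ n ⟶ Φ (n + 1)) (ep : ∀ n, Φ (n + 1) ⟶ Φ n)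

/-- composite of embeddings `Φ a ⟶ Φ b` for `a ≤ b`. -/
def embc {a b : ℕ} (h : a ≤ b) : Φ a ⟶ Φ b :=
  Nat.leRecOn h (fun {k} f => f ≫ e k) (𝟙 (Φ a))

/-- composite of projections `Φ b ⟶ Φ a` for `a ≤ b`. -/
def projc {a b : ℕ} (h : a ≤ b) : Φ b ⟶ Φ a :=
  Nat.leRecOn (C := fun k => Φ k ⟶ Φ a) h (fun {k} f => ep k ≫ f) (𝟙 (Φ a))

lemma embc_self (a : ℕ) : embc Φ e (le_refl a) = 𝟙 (Φ a) := Nat.leRecOn_self _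
lemma projc_self (a : ℕ) : projc Φ ep (le_refl a) = 𝟙 (Φ a) := Nat.leRecOn_self _

lemma embc_succ {a b : ℕ} (h : a ≤ b) (h2 : a ≤ b + 1) :
    embc Φ e h2 = embc Φ e h ≫ e b := Nat.leRecOn_succ h _

lemma projc_succ {a b : ℕ} (h : a ≤ b) (h2 : a ≤ b + 1) :
    projc Φ ep h2 = ep b ≫ projc Φ ep h := Nat.leRecOn_succ (C := fun k => Φ k ⟶ Φ a) h _

lemma embc_succ_left {a b : ℕ} (h2 : a + 1 ≤ b) :
    e a ≫ embc Φ e h2 = embc Φ e (Nat.le_of_succ_le h2) := by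
  induction b, h2 using Nat.le_induction with
  | base =>
      rw [embc_self, embc_succ Φ e (le_refl a), embc_self, Category.comp_id, Category.id_comp]
  | succ b hb ih =>
      rw [embc_succ Φ e hb, embc_succ Φ e (Nat.le_of_succ_le hb),
        ← Category.assoc, ih]

lemma projc_succ_left {a b : ℕ} (h2 : a + 1 ≤ b) :
    projc Φ ep (Nat.le_of_succ_le h2) = projc Φ ep h2 ≫ ep a := by
  induction b, h2 using Nat.le_induction with
  | base =>
      rw [projc_self, projc_succ Φ ep (le_refl a), projc_self, Category.comp_id,
        Category.id_comp]
  | succ b hb ih =>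
      rw [projc_succ Φ ep hb, projc_succ Φ ep (Nat.le_of_succ_le hb),
        ih, Category.assoc]

/-- the connecting morphism `Φ m ⟶ Φ n`. -/
def dd (n m : ℕ) : Φ m ⟶ Φ n :=
  if h : m ≤ n then embc Φ e h else projc Φ ep (le_of_not_ge h)

lemma dd_self (n : ℕ) : dd Φ e ep n n = 𝟙 (Φ n) := by
  rw [dd, dif_pos (le_refl n), embc_self]

lemma dd_cocone (he₁ : ∀ n, e n ≫ ep n = 𝟙 (Φ n)) (n m : ℕ) :
    e m ≫ dd Φ e ep n (m + 1) = dd Φ e ep n m := by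
  by_cases h : m + 1 ≤ n
  · rw [dd, dif_pos h, dd, dif_pos (Nat.le_of_succ_le h), embc_succ_left]
  · have hn : n ≤ m := Nat.le_of_lt_succ (Nat.lt_of_not_le h)
    rw [dd, dif_neg h]
    rcases eq_or_lt_of_le hn with rfl | hlt
    · rw [dd_self, projc_succ Φ ep (le_refl n), projc_self, Category.comp_id]
      exact he₁ n
    · rw [dd, dif_neg (Nat.not_le_of_lt hlt), projc_succ Φ ep hn, ← Category.assoc,
        he₁, Category.id_comp]

lemma dd_proj (he₁ : ∀ n, e n ≫ ep n = 𝟙 (Φ n)) (n m : ℕ) :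
    dd Φ e ep n m = dd Φ e ep (n + 1) m ≫ ep n := by
  by_cases h : m ≤ n
  · rw [dd, dif_pos h, dd, dif_pos (Nat.le_succ_of_le h),
      embc_succ Φ e h, Category.assoc, he₁, Category.comp_id]
  · have hn : n + 1 ≤ m := Nat.succ_le_of_lt (Nat.lt_of_not_le h)
    rw [dd, dif_neg h]
    rcases eq_or_lt_of_le hn with rfl | hlt
    · rw [dd_self, Category.id_comp, projc_succ Φ ep (le_refl n), projc_self,
        Category.comp_id]
    · rw [dd, dif_neg (Nat.not_le_of_lt hlt), projc_succ_left Φ ep hn]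

lemma dd_emb (n m : ℕ) (h : n ≤ m) :
    dd Φ e ep (m + 1) n = dd Φ e ep m n ≫ e m := by
  rw [dd, dif_pos (Nat.le_succ_of_le h), dd, dif_pos h, embc_succ Φ e h]

end Aux

/-- A colimiting cocone α : Φ ⇒ A over an ω-chain of embeddings is an
O-colimit: each leg α_n is an embedding and ⊔ₙ α_n ∘ α_n^p = 𝟙 A. -/
theorem colimit_is_ocolimit {K : Type u} [Category.{v} K] [OCat K]
    (Φ : ℕ → K) (e : ∀ n, Φ n ⟶ Φ (n + 1)) (ep : ∀ n, Φ (n + 1) ⟶ Φ n)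
    (he₁ : ∀ n, e n ≫ ep n = 𝟙 (Φ n)) (he₂ : ∀ n, ep n ≫ e n ≤ 𝟙 (Φ (n + 1)))
    (A : K) (α : ∀ n, Φ n ⟶ A)
    (hαcocone : ∀ n, e n ≫ α (n + 1) = α n)
    (hcolim : ∀ (D : K) (δ : ∀ n, Φ n ⟶ D), (∀ n, e n ≫ δ (n + 1) = δ n) →
      ∃! γ : A ⟶ D, ∀ n, α n ≫ γ = δ n) :
    ∃ αp : ∀ n, A ⟶ Φ n,
      (∀ n, α n ≫ αp n = 𝟙 (Φ n)) ∧ (∀ n, αp n ≫ α n ≤ 𝟙 A) ∧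
      ∃ hm : Monotone fun n => αp n ≫ α n,
        ωSup ⟨fun n => αp n ≫ α n, hm⟩ = 𝟙 A := by
  -- the projections
  have hex : ∀ n, ∃! γ : A ⟶ Φ n, ∀ m, α m ≫ γ = dd Φ e ep n m := fun n =>
    hcolim (Φ n) (dd Φ e ep n) (dd_cocone Φ e ep he₁ n)
  choose αp hspec huniq using hex
  -- section property
  have hsec : ∀ n, α n ≫ αp n = 𝟙 (Φ n) := fun n => by
    rw [hspec n n, dd_self]
  -- αp n = αp (n+1) ≫ ep n
  have hstep : ∀ n, αp n = αp (n + 1) ≫ ep n := fun n => by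
    refine (huniq n _ fun m => ?_).symm
    rw [← Category.assoc, hspec (n + 1) m, ← dd_proj Φ e ep he₁]
  -- monotonicity of θ n = αp n ≫ α n
  have hm : Monotone fun n => αp n ≫ α n := by
    apply monotone_nat_of_le_succ
    intro n
    calc αp n ≫ α n = αp (n + 1) ≫ (ep n ≫ e n) ≫ α (n + 1) := by
          rw [hstep n, ← hαcocone n]; simp [Category.assoc]
      _ ≤ αp (n + 1) ≫ 𝟙 (Φ (n + 1)) ≫ α (n + 1) :=
          OCat.comp_mono le_rfl (OCat.comp_mono (he₂ n) le_rfl)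
      _ = αp (n + 1) ≫ α (n + 1) := by rw [Category.id_comp]
  -- key: for n ≤ m, α n ≫ (αp m ≫ α m) = α n
  have hkey : ∀ n m, n ≤ m → α n ≫ αp m ≫ α m = α n := by
    intro n m h
    rw [← Category.assoc, hspec m n]
    induction h with
    | refl => rw [dd_self, Category.id_comp]
    | @step m' h' ih =>
        rw [dd_emb Φ e ep n m' h', Category.assoc, hαcocone, ih]
  -- ωSup θ = 𝟙 A
  have hsup : ωSup ⟨fun n => αp n ≫ α n, hm⟩ = 𝟙 A := by
    obtain ⟨γ, -, hu⟩ := hcolim A α hαcocone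
    have h1 : 𝟙 A = γ := hu (𝟙 A) (fun n => Category.comp_id _)
    refine (hu _ fun n => ?_).trans h1.symm
    have hm' : Monotone fun m => α n ≫ αp m ≫ α m :=
      fun a b hab => OCat.comp_mono le_rfl (hm hab)
    rw [OCat.comp_cont_right (α n) _ hm']
    apply le_antisymm
    · apply ωSup_le
      intro m
      calc α n ≫ αp m ≫ α m ≤ α n ≫ αp (max n m) ≫ α (max n m) :=
            OCat.comp_mono le_rfl (hm (le_max_right n m))
        _ = α n := hkey n (max n m) (le_max_left n m)
    · have := le_ωSup (⟨fun m => α n ≫ αp m ≫ α m, hm'⟩ : Chain (Φ n ⟶ A)) n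
      rwa [show (⟨fun m => α n ≫ αp m ≫ α m, hm'⟩ : Chain (Φ n ⟶ A)) n
          = α n from hkey n n le_rfl] at this
  refine ⟨αp, hsec, fun n => ?_, hm, hsup⟩
  have := le_ωSup (⟨fun n => αp n ≫ α n, hm⟩ : Chain (A ⟶ A)) n
  rwa [hsup] at this
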